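/- For k = 4 and w₁ ∈ (0, 1/2), the binary KL divergence D_KL(p₀₀ ‖ 1/6) = (1-p₀₀)ln((6/5)(1-p₀₀)) + p₀₀ ln(6p₀₀) is a lower bound for D_min(w₁) = w₁ ln(6(w₁-w₂)) + (1-w₁) ln(6(1-w₁-w₂)), where w₂ = w₂(w₁) = (2-√(12(w₁-1/2)²+1))/3 and p₀₀ = 1 - w₁ - w₂. -/

import Mathlib

/-!
Write `w₂ = w2fun w₁`, `p₁₁ = w₁ - w₂` and `p₀₀ = 1 - w₁ - w₂`. Since `w₂` is the smaller root of
`3 t² - 4 t + 4 w₁ (1 - w₁) = 0`, it satisfies `w₂² = 4 p₁₁ p₀₀`, hence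
`ln (6 p₁₁) + ln (6 p₀₀) = 2 ln (3 w₂)` and
`D_min = p₁₁ ln (p₁₁ / (1/6)) + 2 w₂ ln (2 w₂ / (2/3)) + p₀₀ ln (6 p₀₀)`.
The log-sum inequality merges the first two terms into
`(1 - p₀₀) ln ((1 - p₀₀) / (5/6))`.
-/

noncomputable def w2fun (w₁ : ℝ) : ℝ := (2 - Real.sqrt (12 * (w₁ - 1 / 2) ^ 2 + 1)) / 3

noncomputable def Dmin (w₁ : ℝ) : ℝ :=
  w₁ * Real.log (6 * (w₁ - w2fun w₁)) + (1 - w₁) * Real.log (6 * (1 - w₁ - w2fun w₁))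

open Real

theorem add_mul_log_add_div_add_le {a b α β : ℝ} (ha : 0 ≤ a) (hb : 0 ≤ b) (hα : 0 < α)
    (hβ : 0 < β) :
    (a + b) * log ((a + b) / (α + β)) ≤ a * log (a / α) + b * log (b / β) := by
  have hαβ : 0 < α + β := by positivity
  have hmean : α / (α + β) * (a / α) + β / (α + β) * (b / β) = (a + b) / (α + β) := by
    field_simp
  have hconv := convexOn_mul_log.2 (Set.mem_Ici.2 (div_nonneg ha hα.le))
    (Set.mem_Ici.2 (div_nonneg hb hβ.le)) (div_pos hα hαβ).le (div_pos hβ hαβ).le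
    (by field_simp)
  simp only [smul_eq_mul, hmean] at hconv
  have ea : (α + β) * (α / (α + β) * (a / α)) = a := by field_simp
  have eb : (α + β) * (β / (α + β) * (b / β)) = b := by field_simp
  calc (a + b) * log ((a + b) / (α + β))
      = (α + β) * ((a + b) / (α + β) * log ((a + b) / (α + β))) := by field_simp
    _ ≤ (α + β) * (α / (α + β) * (a / α * log (a / α)) + β / (α + β) * (b / β * log (b / β))) :=
      mul_le_mul_of_nonneg_left hconv hαβ.le
    _ = a * log (a / α) + b * log (b / β) := by
      linear_combination log (a / α) * ea + log (b / β) * eb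

section W2fun

variable {w₁ : ℝ}

theorem sq_sqrt_w2fun_arg (w₁ : ℝ) :
    Real.sqrt (12 * (w₁ - 1 / 2) ^ 2 + 1) ^ 2 = 12 * (w₁ - 1 / 2) ^ 2 + 1 :=
  Real.sq_sqrt (by positivity)

theorem w2fun_sq (w₁ : ℝ) :
    w2fun w₁ ^ 2 = 4 * (w₁ - w2fun w₁) * (1 - w₁ - w2fun w₁) := by
  unfold w2fun
  linear_combination (-1 / 3 : ℝ) * sq_sqrt_w2fun_arg w₁

theorem w2fun_one_sub (w₁ : ℝ) : w2fun (1 - w₁) = w2fun w₁ := by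
  unfold w2fun
  ring_nf

theorem w2fun_nonneg (h₀ : 0 ≤ w₁) (h₁ : w₁ ≤ 1) : 0 ≤ w2fun w₁ := by
  have : Real.sqrt (12 * (w₁ - 1 / 2) ^ 2 + 1) ≤ 2 :=
    Real.sqrt_le_iff.2 ⟨by norm_num, by nlinarith⟩
  unfold w2fun
  linarith

theorem w2fun_lt_self (h : w₁ ≠ 0) : w2fun w₁ < w₁ := by
  have hR := sq_sqrt_w2fun_arg w₁
  have hR₀ := Real.sqrt_nonneg (12 * (w₁ - 1 / 2) ^ 2 + 1)
  have hw : 0 < w₁ ^ 2 := by positivity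
  unfold w2fun
  nlinarith

theorem w2fun_lt_one_sub (h : w₁ ≠ 1) : w2fun w₁ < 1 - w₁ := by
  simpa [w2fun_one_sub] using w2fun_lt_self (w₁ := 1 - w₁) (sub_ne_zero.2 (Ne.symm h))

end W2fun

theorem stmt_13 (w₁ : ℝ) (hw : w₁ ∈ Set.Ioo (0 : ℝ) (1 / 2)) :
    (1 - (1 - w₁ - w2fun w₁)) * Real.log (6 / 5 * (1 - (1 - w₁ - w2fun w₁)))
      + (1 - w₁ - w2fun w₁) * Real.log (6 * (1 - w₁ - w2fun w₁)) ≤ Dmin w₁ := by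
  obtain ⟨h₀, h₁⟩ := hw
  set w₂ := w2fun w₁
  have hp₁₁ : 0 < w₁ - w₂ := sub_pos.2 (w2fun_lt_self h₀.ne')
  have hp₀₀ : 0 < 1 - w₁ - w₂ := sub_pos.2 (w2fun_lt_one_sub (by linarith))
  have hw₂₀ : 0 ≤ 2 * w₂ := mul_nonneg zero_le_two (w2fun_nonneg h₀.le (by linarith))
  have hlog : log (6 * (w₁ - w₂)) + log (6 * (1 - w₁ - w₂)) = 2 * log (3 * w₂) := by
    have hsq : 6 * (w₁ - w₂) * (6 * (1 - w₁ - w₂)) = (3 * w₂) ^ 2 := by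
      linear_combination (-9 : ℝ) * w2fun_sq w₁
    rw [← log_mul (by positivity) (by positivity), hsq, log_pow]
    norm_num
  have hsum : (1 - (1 - w₁ - w₂)) * log (6 / 5 * (1 - (1 - w₁ - w₂)))
      ≤ (w₁ - w₂) * log (6 * (w₁ - w₂)) + 2 * w₂ * log (3 * w₂) := by
    convert add_mul_log_add_div_add_le hp₁₁.le hw₂₀ (by norm_num : (0 : ℝ) < 1 / 6)
      (by norm_num : (0 : ℝ) < 2 / 3) using 4 <;> ring
  unfold Dmin
  linear_combination hsum - w₂ * hlog
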